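/- arXiv:1707.00349 — 3 statements merged into one kernel-verified Lean document; each statement's English description precedes it below -/
import Mathlib

section
/- Let G be a finite group and let S be a nonempty finite subset of G. Then there exists a finite subset T of G such that the pointwise product set S * T equals all of G, and the cardinality of T satisfies (|T| : ℝ) ≤ (Nat.card G) * Real.log (Nat.card G) / |S| + 1. -/
/-! Greedy covering. Averaging over all translates, some `S * {t}` covers at least a fraction
`|S| / |G|` of any set `U`, so the uncovered part shrinks by a factor `1 - |S|/|G| ≤ exp (-|S|/|G|)`
with each translate added. Hence covering a set `U` costs at most `(|G|/|S|) log |U| + 1` translates: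
every greedy step lowers `log` of the uncovered part by at least `|S|/|G|`. -/

open Pointwise Finset

lemma Real.log_le_log_sub_of_le_mul_one_sub {x y a : ℝ} (hx : 0 < x) (hy : 0 < y)
    (h : y ≤ x * (1 - a)) : Real.log y ≤ Real.log x - a := by
  have hexp : y ≤ x * Real.exp (-a) :=
    h.trans (mul_le_mul_of_nonneg_left (by linarith [Real.add_one_le_exp (-a)]) hx.le)
  calc Real.log y ≤ Real.log (x * Real.exp (-a)) := Real.log_le_log hy hexp
    _ = Real.log x - a := by
      rw [Real.log_mul hx.ne' (Real.exp_pos _).ne', Real.log_exp, sub_eq_add_neg]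

namespace Finset

variable {G : Type*} [Group G] [DecidableEq G]

lemma mem_mul_singleton_iff_mem_inv_mul_singleton (S : Finset G) (u t : G) :
    u ∈ S * {t} ↔ t ∈ S⁻¹ * {u} := by
  simp [mem_mul, ← eq_mul_inv_iff_mul_eq]

variable [Fintype G]

lemma sum_card_inter_mul_singleton (S U : Finset G) :
    ∑ t, #(U ∩ (S * {t})) = #S * #U := by
  have fiber (u : G) : #{t | u ∈ S * {t}} = #S := by
    have : ({t | u ∈ S * {t}} : Finset G) = S⁻¹ * {u} := by
      ext t
      rw [mem_filter_univ, mem_mul_singleton_iff_mem_inv_mul_singleton]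
    rw [this, card_mul_singleton, card_inv]
  simp_rw [← filter_mem_eq_inter, card_filter]
  rw [sum_comm]
  simp_rw [← card_filter, fiber, sum_const, smul_eq_mul, mul_comm]

lemma exists_card_mul_le_card_inter_mul_singleton (S U : Finset G) :
    ∃ t, #S * #U ≤ Fintype.card G * #(U ∩ (S * {t})) := by
  obtain ⟨t, -, ht⟩ := exists_le_of_sum_le univ_nonempty (f := fun _ ↦ #S * #U)
    (g := fun t ↦ Fintype.card G * #(U ∩ (S * {t})))
    (by rw [sum_const, card_univ, smul_eq_mul, ← mul_sum, sum_card_inter_mul_singleton])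
  exact ⟨t, ht⟩

lemma exists_card_sdiff_mul_singleton_le (S U : Finset G) :
    ∃ t, (#(U \ (S * {t})) : ℝ) ≤ #U * (1 - #S / Fintype.card G) := by
  obtain ⟨t, ht⟩ := exists_card_mul_le_card_inter_mul_singleton S U
  refine ⟨t, ?_⟩
  have hsplit : (#(U \ (S * {t})) : ℝ) + #(U ∩ (S * {t})) = #U := by
    exact_mod_cast card_sdiff_add_card_inter U (S * {t})
  have hN : (0 : ℝ) < Fintype.card G := by exact_mod_cast Fintype.card_pos
  have hmass : (#S : ℝ) * #U / Fintype.card G ≤ #(U ∩ (S * {t})) := by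
    rw [div_le_iff₀ hN, mul_comm _ (Fintype.card G : ℝ)]
    exact_mod_cast ht
  rw [show (#U : ℝ) * (1 - #S / Fintype.card G) = #U - #S * #U / Fintype.card G by ring]
  linarith

theorem exists_subset_mul_card_le_log {S : Finset G} (hS : S.Nonempty) {U : Finset G}
    (hU : U.Nonempty) :
    ∃ T : Finset G, U ⊆ S * T ∧
      (#T : ℝ) ≤ Fintype.card G * Real.log #U / #S + 1 := by
  induction U using Finset.strongInduction with
  | H U ih =>
  obtain ⟨t, ht⟩ := exists_card_sdiff_mul_singleton_le S U
  have hN : (0 : ℝ) < Fintype.card G := by exact_mod_cast Fintype.card_pos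
  have hs : (0 : ℝ) < #S := by exact_mod_cast hS.card_pos
  have hUpos : (0 : ℝ) < #U := by exact_mod_cast hU.card_pos
  rcases (U \ (S * {t})).eq_empty_or_nonempty with hcov | hrest
  · have hlog : 0 ≤ Fintype.card G * Real.log #U / #S := by positivity
    exact ⟨{t}, sdiff_eq_empty_iff_subset.1 hcov, by simpa using hlog⟩
  have hrestpos : (0 : ℝ) < #(U \ (S * {t})) := by exact_mod_cast hrest.card_pos
  have hshrink : U \ (S * {t}) ⊂ U := by
    have hlt : #(U \ (S * {t})) < #U := by
      exact_mod_cast ht.trans_lt (mul_lt_of_lt_one_right hUpos (sub_lt_self 1 (div_pos hs hN)))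
    exact sdiff_subset.ssubset_of_ne fun h ↦ hlt.ne (congrArg card h)
  obtain ⟨T, hT, hTcard⟩ := ih _ hshrink hrest
  refine ⟨insert t T, fun u hu ↦ ?_, ?_⟩
  · by_cases hut : u ∈ S * {t}
    · exact mul_subset_mul_left (singleton_subset_iff.2 (mem_insert_self t T)) hut
    · exact mul_subset_mul_left (subset_insert t T) (hT (mem_sdiff.2 ⟨hu, hut⟩))
  · have hlog := Real.log_le_log_sub_of_le_mul_one_sub hUpos hrestpos ht
    calc (#(insert t T) : ℝ) ≤ #T + 1 := by exact_mod_cast card_insert_le t T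
      _ ≤ Fintype.card G * Real.log #(U \ (S * {t})) / #S + 2 := by linarith
      _ ≤ Fintype.card G * (Real.log #U - #S / Fintype.card G) / #S + 2 := by gcongr
      _ = Fintype.card G * Real.log #U / #S + 1 := by
        field_simp
        ring

end Finset

theorem covering_by_translates {G : Type*} [Group G] [Fintype G] [DecidableEq G]
    (S : Finset G) (hS : S.Nonempty) :
    ∃ T : Finset G, S * T = Finset.univ ∧
      (T.card : ℝ) ≤ (Nat.card G : ℝ) * Real.log (Nat.card G) / S.card + 1 := by
  obtain ⟨T, hcover, hcard⟩ := exists_subset_mul_card_le_log hS (univ_nonempty (α := G))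
  rw [card_univ] at hcard
  exact ⟨T, univ_subset_iff.1 hcover, by rwa [Nat.card_eq_fintype_card]⟩
end

section
/- Let G be a finite solvable group and let a, b be coprime natural numbers with Nat.card G = a * b. Then there exist subgroups H and K of G with Nat.card H = a, Nat.card K = b, H ⊓ K = ⊥ (trivial intersection), and with pointwise product set ↑H * ↑K equal to all of G. -/
open Pointwise

/-!
Hall subgroups of a solvable group `G` exist by induction on `|G|`. A nontrivial solvable group
has a nontrivial normal `p`-subgroup `N` (a Sylow subgroup of the last nontrivial term of the
derived series), and the prime power `|N|` divides `a` or `b`. If `|N| ∣ a`, pull back a subgroup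
of index `b` from `G ⧸ N`. If `b = |N| * b'`, pull back a subgroup `K` of index `b'`; `N` is then
a normal Hall subgroup of `K`, and a Schur–Zassenhaus complement of `N` in `K` has index `b`
in `G`. Subgroups of coprime orders `a` and `b` meet trivially, so their product is all of `G`.
-/

section

variable {G : Type*} [Group G]

theorem Group.IsSolvable.exists_characteristic_isMulCommutative_ne_bot [Group.IsSolvable G]
    [Nontrivial G] : ∃ A : Subgroup G, A.Characteristic ∧ IsMulCommutative A ∧ A ≠ ⊥ := by
  classical
  have hsolv : ∃ n, derivedSeries G n = ⊥ := Group.IsSolvable.solvable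
  have hlen : Nat.find hsolv ≠ 0 := by
    intro h
    have := Nat.find_spec hsolv
    rw [h, derivedSeries_zero] at this
    exact top_ne_bot this
  obtain ⟨n, hn⟩ := Nat.exists_eq_add_one_of_ne_zero hlen
  refine ⟨derivedSeries G n, inferInstance, ?_, Nat.find_min hsolv (by omega)⟩
  rw [← Subgroup.commutator_self_eq_bot_iff, ← derivedSeries_succ, ← hn]
  exact Nat.find_spec hsolv

theorem Subgroup.exists_characteristic_isPGroup_ne_bot_of_isMulCommutative [Finite G]
    (A : Subgroup G) [A.Characteristic] [IsMulCommutative A] (hA : A ≠ ⊥) :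
    ∃ (p : ℕ) (N : Subgroup G), p.Prime ∧ N.Characteristic ∧ N ≠ ⊥ ∧ IsPGroup p N := by
  obtain ⟨p, hp, hpA⟩ := Nat.exists_prime_and_dvd ((A.one_lt_card_iff_ne_bot.mpr hA).ne')
  have : Fact p.Prime := ⟨hp⟩
  obtain ⟨P⟩ : Nonempty (Sylow p A) := inferInstance
  have : P.Characteristic := P.characteristic_of_normal inferInstance
  refine ⟨p, P.map A.subtype, hp, inferInstance, ?_, P.isPGroup'.map A.subtype⟩
  rw [Ne, Subgroup.map_eq_bot_iff_of_injective _ A.subtype_injective]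
  exact P.ne_bot_of_dvd_card hpA

theorem IsPGroup.isPrimePow_card {p : ℕ} [Fact p.Prime] [Finite G] [Nontrivial G]
    (hG : IsPGroup p G) : IsPrimePow (Nat.card G) := by
  obtain ⟨k, hk⟩ := hG.exists_card_eq
  have hk0 : k ≠ 0 := by
    rintro rfl
    exact (Finite.one_lt_card (α := G)).ne' (hk.trans (pow_zero p))
  exact hk ▸ (Fact.out : p.Prime).isPrimePow.pow hk0

theorem Group.IsSolvable.exists_normal_isPrimePow_card [Finite G] [Group.IsSolvable G]
    [Nontrivial G] : ∃ N : Subgroup G, N.Normal ∧ N ≠ ⊥ ∧ IsPrimePow (Nat.card N) := by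
  obtain ⟨A, _, _, hA⟩ := exists_characteristic_isMulCommutative_ne_bot (G := G)
  obtain ⟨p, N, hp, _, hN, hNp⟩ :=
    A.exists_characteristic_isPGroup_ne_bot_of_isMulCommutative hA
  have : Fact p.Prime := ⟨hp⟩
  have : Nontrivial N := N.nontrivial_iff_ne_bot.mpr hN
  exact ⟨N, inferInstance, hN, hNp.isPrimePow_card⟩

theorem Subgroup.exists_index_eq_card_mul_index_of_coprime [Finite G] {N K : Subgroup G}
    [N.Normal] (hNK : N ≤ K) (hcop : (Nat.card N).Coprime (N.relIndex K)) :
    ∃ H : Subgroup G, H.index = Nat.card N * K.index := by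
  have hcard : Nat.card (N.subgroupOf K) = Nat.card N :=
    Nat.card_congr (Subgroup.subgroupOfEquivOfLe hNK).toEquiv
  obtain ⟨C, hC⟩ := Subgroup.exists_right_complement'_of_coprime (N := N.subgroupOf K)
    (hcard ▸ hcop)
  exact ⟨C.map K.subtype, by rw [Subgroup.index_map_subtype, hC.index_eq_card, hcard]⟩

theorem Subgroup.card_quotient_lt [Finite G] {N : Subgroup G} (hN : N ≠ ⊥) :
    Nat.card (G ⧸ N) < Nat.card G := by
  rw [← N.index_eq_card, ← N.card_mul_index]
  exact lt_mul_left (Nat.pos_of_ne_zero Subgroup.index_ne_zero_of_finite)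
    (N.one_lt_card_iff_ne_bot.mpr hN)

theorem Subgroup.card_quotient_eq_of_card_eq_mul {N : Subgroup G} [Finite N] {m : ℕ}
    (h : Nat.card G = Nat.card N * m) : Nat.card (G ⧸ N) = m := by
  rw [← N.index_eq_card]
  exact Nat.eq_of_mul_eq_mul_left Nat.card_pos (N.card_mul_index.trans h)

theorem Group.IsSolvable.exists_subgroup_index_eq_of_coprime [Finite G] [Group.IsSolvable G]
    {a b : ℕ} (hab : a.Coprime b) (hcard : Nat.card G = a * b) :
    ∃ H : Subgroup G, H.index = b := by
  induction h : Nat.card G using Nat.strong_induction_on generalizing G a b with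
  | _ n ih =>
  subst h
  rcases eq_or_ne a 1 with rfl | ha
  · exact ⟨⊥, by rw [Subgroup.index_bot, hcard, one_mul]⟩
  have : Nontrivial G := by
    rw [← Finite.one_lt_card_iff_nontrivial, hcard]
    exact lt_of_le_of_ne (hcard ▸ Nat.card_pos)
      fun h ↦ ha (Nat.eq_one_of_mul_eq_one_right h.symm)
  obtain ⟨N, _, hN, hNpow⟩ := exists_normal_isPrimePow_card (G := G)
  have hquot_lt := Subgroup.card_quotient_lt hN
  rcases (hab.isPrimePow_dvd_mul hNpow).mp (hcard ▸ N.card_subgroup_dvd_card) with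
    ⟨a', rfl⟩ | ⟨b', rfl⟩
  · have hquot := Subgroup.card_quotient_eq_of_card_eq_mul (hcard.trans (mul_assoc _ _ _))
    obtain ⟨H, hH⟩ := ih _ hquot_lt hab.coprime_mul_left hquot rfl
    exact ⟨H.comap (QuotientGroup.mk' N), by
      rw [H.index_comap_of_surjective (QuotientGroup.mk'_surjective N), hH]⟩
  · have hquot := Subgroup.card_quotient_eq_of_card_eq_mul (hcard.trans (mul_left_comm _ _ _))
    obtain ⟨H, hH⟩ := ih _ hquot_lt hab.coprime_mul_left_right hquot rfl
    set K := H.comap (QuotientGroup.mk' N)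
    have hKindex : K.index = b' := by
      rw [H.index_comap_of_surjective (QuotientGroup.mk'_surjective N), hH]
    have hNK : N ≤ K := by
      simpa only [QuotientGroup.ker_mk'] using (QuotientGroup.mk' N).ker_le_comap H
    have hrel : N.relIndex K = a := by
      have hb' : b' ≠ 0 := right_ne_zero_of_mul (hquot ▸ Nat.card_pos.ne')
      refine Nat.eq_of_mul_eq_mul_right (Nat.pos_of_ne_zero hb') ?_
      rw [← hKindex, Subgroup.relIndex_mul_index hNK, N.index_eq_card, hquot, hKindex]
    rw [← hKindex]
    exact Subgroup.exists_index_eq_card_mul_index_of_coprime hNK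
      (hrel ▸ (Nat.coprime_mul_iff_right.mp hab).1.symm)

theorem Group.IsSolvable.exists_subgroup_card_eq_of_coprime [Finite G] [Group.IsSolvable G]
    {a b : ℕ} (hab : a.Coprime b) (hcard : Nat.card G = a * b) :
    ∃ H : Subgroup G, Nat.card H = a := by
  obtain ⟨H, hH⟩ := exists_subgroup_index_eq_of_coprime hab hcard
  have hb : 0 < b := hH ▸ Nat.pos_of_ne_zero Subgroup.index_ne_zero_of_finite
  exact ⟨H, Nat.eq_of_mul_eq_mul_right hb (by rw [← hH, H.card_mul_index, hcard, hH])⟩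

end

theorem solvable_hall_complement {G : Type*} [Group G] [Finite G] [Group.IsSolvable G]
    (a b : ℕ) (hab : Nat.Coprime a b) (hcard : Nat.card G = a * b) :
    ∃ H K : Subgroup G, Nat.card H = a ∧ Nat.card K = b ∧ H ⊓ K = ⊥ ∧
      (↑H * ↑K : Set G) = Set.univ := by
  obtain ⟨H, hH⟩ := Group.IsSolvable.exists_subgroup_card_eq_of_coprime hab hcard
  obtain ⟨K, hK⟩ := Group.IsSolvable.exists_subgroup_card_eq_of_coprime hab.symm
    (hcard.trans (mul_comm a b))
  have hcompl : H.IsComplement' K :=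
    Subgroup.isComplement'_of_coprime (by rw [hH, hK, hcard]) (by rwa [hH, hK])
  exact ⟨H, K, hH, hK, hcompl.disjoint.eq_bot, hcompl.mul_eq⟩
end

section
/- Let ι, κ, μ be finite index sets, let d : ι → ℕ, e : κ → ℕ, f : μ → ℕ, and let n : ι → μ → ℕ and m : κ → μ → ℕ. Let h, k, g be natural numbers and α ≥ 1 a real number. Assume: (a) (d i)² ≤ h for all i ∈ ι; (b) (e j)² ≤ k for all j ∈ κ; (c) ∑_{i ∈ ι} d i * n i l = f l for all l ∈ μ; (d) ∑_{j ∈ κ} e j * m j l = f l for all l ∈ μ; and (e) ∑_{l ∈ μ} (f l)² = g. Then ∑_{i ∈ ι} ∑_{j ∈ κ} ((d i * e j : ℕ) : ℝ)^α * (∑_{l ∈ μ} n i l * m j l : ℕ) ≤ (h : ℝ)^{(α−1)/2} * (k : ℝ)^{(α−1)/2} * (g : ℝ). -/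
/-!
Each product `x = dᵢ eⱼ` satisfies `x² ≤ h k`, so `x ^ α = x ^ (α - 1) · x ≤ (h k) ^ ((α - 1) / 2) · x`.
What remains is `∑ᵢ ∑ⱼ dᵢ eⱼ ∑ₗ nᵢₗ mⱼₗ`, which regroups by `l` as `∑ₗ (∑ᵢ dᵢ nᵢₗ)(∑ⱼ eⱼ mⱼₗ) = ∑ₗ fₗ² = g`.
-/
open Finset

theorem sum_sum_mul_sum_mul_eq_sum_sq {R ι κ μ : Type*} [CommSemiring R]
    [Fintype ι] [Fintype κ] [Fintype μ] {d : ι → R} {e : κ → R} {f : μ → R}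
    {n : ι → μ → R} {m : κ → μ → R}
    (hn : ∀ l, ∑ i, d i * n i l = f l) (hm : ∀ l, ∑ j, e j * m j l = f l) :
    ∑ i, ∑ j, d i * e j * ∑ l, n i l * m j l = ∑ l, f l ^ 2 := by
  calc ∑ i, ∑ j, d i * e j * ∑ l, n i l * m j l
      = ∑ i, ∑ j, ∑ l, d i * n i l * (e j * m j l) := by
        simp only [mul_sum]
        exact sum_congr rfl fun i _ => sum_congr rfl fun j _ => sum_congr rfl fun l _ => by ring
    _ = ∑ l, ∑ i, ∑ j, d i * n i l * (e j * m j l) := sum_comm_cycle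
    _ = ∑ l, f l ^ 2 := sum_congr rfl fun l _ => by rw [← sum_mul_sum, hn, hm, sq]

namespace Real

theorem rpow_le_mul_self_of_rpow_sub_one_le {x C α : ℝ} (hx : 0 ≤ x) (hα : α ≠ 0)
    (h : x ^ (α - 1) ≤ C) : x ^ α ≤ C * x :=
  calc x ^ α = x ^ (α - 1) * x := by rw [← rpow_add_one' hx (by simpa using hα), sub_add_cancel]
    _ ≤ C * x := mul_le_mul_of_nonneg_right h hx

theorem rpow_le_rpow_half_mul_rpow_half_of_sq_le_mul {x a b s : ℝ} (hx : 0 ≤ x) (ha : 0 ≤ a)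
    (hb : 0 ≤ b) (hs : 0 ≤ s) (hxab : x ^ 2 ≤ a * b) : x ^ s ≤ a ^ (s / 2) * b ^ (s / 2) :=
  calc x ^ s = (x ^ 2) ^ (s / 2) := by rw [← rpow_two, ← rpow_mul hx]; ring_nf
    _ ≤ (a * b) ^ (s / 2) := rpow_le_rpow (by positivity) hxab (by positivity)
    _ = a ^ (s / 2) * b ^ (s / 2) := mul_rpow ha hb

end Real

theorem lifting_multiplicity_bound {ι κ μ : Type*} [Fintype ι] [Fintype κ] [Fintype μ]
    (d : ι → ℕ) (e : κ → ℕ) (f : μ → ℕ) (n : ι → μ → ℕ) (m : κ → μ → ℕ)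
    (h k g : ℕ) (α : ℝ) (hα : 1 ≤ α)
    (ha : ∀ i, (d i) ^ 2 ≤ h) (hb : ∀ j, (e j) ^ 2 ≤ k)
    (hc : ∀ l, ∑ i, d i * n i l = f l)
    (hd : ∀ l, ∑ j, e j * m j l = f l)
    (he : ∑ l, (f l) ^ 2 = g) :
    ∑ i, ∑ j, ((d i * e j : ℕ) : ℝ) ^ α * ((∑ l, n i l * m j l : ℕ) : ℝ) ≤
      (h : ℝ) ^ ((α - 1) / 2) * (k : ℝ) ^ ((α - 1) / 2) * (g : ℝ) := by
  set C := (h : ℝ) ^ ((α - 1) / 2) * (k : ℝ) ^ ((α - 1) / 2)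
  have dim_rpow_le (i : ι) (j : κ) : ((d i * e j : ℕ) : ℝ) ^ α ≤ C * (d i * e j : ℕ) := by
    have hsq : (d i * e j) ^ 2 ≤ h * k := mul_pow (d i) (e j) 2 ▸ Nat.mul_le_mul (ha i) (hb j)
    refine Real.rpow_le_mul_self_of_rpow_sub_one_le (by positivity) (by linarith : 0 < α).ne' ?_
    exact Real.rpow_le_rpow_half_mul_rpow_half_of_sq_le_mul (by positivity) (by positivity)
      (by positivity) (by linarith) (by exact_mod_cast hsq)
  have pairing : ∑ i, ∑ j, d i * e j * ∑ l, n i l * m j l = g :=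
    he ▸ sum_sum_mul_sum_mul_eq_sum_sq hc hd
  calc ∑ i, ∑ j, ((d i * e j : ℕ) : ℝ) ^ α * ((∑ l, n i l * m j l : ℕ) : ℝ)
      ≤ ∑ i, ∑ j, C * (d i * e j : ℕ) * ((∑ l, n i l * m j l : ℕ) : ℝ) := by
        gcongr with i _ j _
        exact dim_rpow_le i j
    _ = C * g := by
        simp only [mul_assoc, ← mul_sum]
        rw [← pairing]
        push_cast
        rfl
end
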